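/- Uniqueness of the topological Jordan decomposition: if s₁u₁ = s₂u₂ in a Hausdorff topological group, where s₁, s₂, u₁, u₂ pairwise commute, s₁ and s₂ have finite order coprime to p, and u₁ and u₂ are topologically p-unipotent, then s₁ = s₂ and u₁ = u₂. -/

import Mathlib

/-- `g` is topologically `p`-unipotent: `g ^ (p ^ n) → 1`. -/
def TopUnipotent (p : ℕ) {G : Type*} [Monoid G] [TopologicalSpace G] (g : G) : Prop :=
  Filter.Tendsto (fun n : ℕ => g ^ (p ^ n)) Filter.atTop (nhds 1)

/-!
The quotient `t = s₂⁻¹ s₁ = u₂ u₁⁻¹` is both torsion of order prime to `p` and topologically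
`p`-unipotent. Since `p ^ φ(n) ≡ 1 [MOD n]`, the sequence `t ^ (p ^ k)` returns to `t` along the
multiples `k` of `φ(n)`, while it converges to `1`; hence `t = 1`.
-/

open Filter

namespace TopUnipotent

variable {p : ℕ} {G : Type*} [TopologicalSpace G]

theorem mul [Monoid G] [ContinuousMul G] {u v : G} (huv : Commute u v)
    (hu : TopUnipotent p u) (hv : TopUnipotent p v) : TopUnipotent p (u * v) := by
  unfold TopUnipotent
  simp_rw [huv.mul_pow]
  simpa using Tendsto.mul hu hv

theorem inv [Group G] [ContinuousInv G] {u : G} (hu : TopUnipotent p u) :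
    TopUnipotent p u⁻¹ := by
  simpa [TopUnipotent, inv_pow] using Tendsto.inv hu

theorem eq_one_of_pow_eq_one [Monoid G] [T2Space G] {t : G} {n : ℕ} (hn : 0 < n)
    (htn : t ^ n = 1) (hcop : n.Coprime p) (ht : TopUnipotent p t) : t = 1 := by
  set m := n.totient
  have hm : 0 < m := Nat.totient_pos.mpr hn
  have hreturn (k : ℕ) : t ^ p ^ (m * k) = t := by
    have hmod : p ^ (m * k) ≡ 1 [MOD n] := by
      simpa [pow_mul] using (Nat.ModEq.pow_totient hcop.symm).pow k
    simpa using pow_eq_pow_of_modEq hmod htn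
  have hsub : Tendsto (fun k : ℕ => m * k) atTop atTop :=
    tendsto_id.const_mul_atTop' hm
  have hconst : Tendsto (fun _ : ℕ => t) atTop (nhds 1) :=
    (ht.comp hsub).congr hreturn
  exact tendsto_const_nhds_iff.mp hconst

end TopUnipotent

theorem Commute.mul_pow_mul_eq_one {M : Type*} [Monoid M] {a b : M} {m n : ℕ}
    (hab : Commute a b) (ha : a ^ m = 1) (hb : b ^ n = 1) : (a * b) ^ (m * n) = 1 := by
  rw [hab.mul_pow, pow_mul, ha, one_pow, one_mul, mul_comm, pow_mul, hb, one_pow]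

theorem topological_jordan_decomposition_unique_general (p : ℕ) {G : Type*} [Group G]
    [TopologicalSpace G] [IsTopologicalGroup G] [T2Space G]
    {s₁ u₁ s₂ u₂ : G}
    (h13 : s₁ * s₂ = s₂ * s₁) (h24 : u₁ * u₂ = u₂ * u₁)
    {n₁ n₂ : ℕ} (hn₁ : 0 < n₁) (hs₁ : s₁ ^ n₁ = 1) (hcop₁ : Nat.gcd n₁ p = 1)
    (hn₂ : 0 < n₂) (hs₂ : s₂ ^ n₂ = 1) (hcop₂ : Nat.gcd n₂ p = 1)
    (hu₁ : TopUnipotent p u₁) (hu₂ : TopUnipotent p u₂)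
    (heq : s₁ * u₁ = s₂ * u₂) :
    s₁ = s₂ ∧ u₁ = u₂ := by
  have hquot : s₂⁻¹ * s₁ = u₂ * u₁⁻¹ := by
    rw [inv_mul_eq_iff_eq_mul, ← mul_assoc, ← heq, mul_inv_cancel_right]
  have htorsion : (s₂⁻¹ * s₁) ^ (n₂ * n₁) = 1 :=
    (Commute.inv_left h13.symm).mul_pow_mul_eq_one (by rw [inv_pow, hs₂, inv_one]) hs₁
  have hunip : TopUnipotent p (s₂⁻¹ * s₁) := by
    rw [hquot]
    exact hu₂.mul (Commute.inv_right h24.symm) hu₁.inv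
  have hs : s₂ = s₁ := inv_mul_eq_one.mp <|
    hunip.eq_one_of_pow_eq_one (Nat.mul_pos hn₂ hn₁) htorsion (Nat.Coprime.mul_left hcop₂ hcop₁)
  subst hs
  exact ⟨rfl, mul_left_cancel heq⟩

/-- Uniqueness of the topological Jordan decomposition: if `s₁ * u₁ = s₂ * u₂`
with all four elements pairwise commuting, `s₁`, `s₂` of finite order coprime
to `p` (absolutely `p`-semisimple) and `u₁`, `u₂` topologically `p`-unipotent,
then `s₁ = s₂` and `u₁ = u₂`. -/
theorem topological_jordan_decomposition_unique (p : ℕ) {G : Type*} [Group G]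
    [TopologicalSpace G] [IsTopologicalGroup G] [T2Space G]
    {s₁ u₁ s₂ u₂ : G}
    (h12 : s₁ * u₁ = u₁ * s₁) (h13 : s₁ * s₂ = s₂ * s₁) (h14 : s₁ * u₂ = u₂ * s₁)
    (h23 : u₁ * s₂ = s₂ * u₁) (h24 : u₁ * u₂ = u₂ * u₁) (h34 : s₂ * u₂ = u₂ * s₂)
    {n₁ n₂ : ℕ} (hn₁ : 0 < n₁) (hs₁ : s₁ ^ n₁ = 1) (hcop₁ : Nat.gcd n₁ p = 1)
    (hn₂ : 0 < n₂) (hs₂ : s₂ ^ n₂ = 1) (hcop₂ : Nat.gcd n₂ p = 1)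
    (hu₁ : TopUnipotent p u₁) (hu₂ : TopUnipotent p u₂)
    (heq : s₁ * u₁ = s₂ * u₂) :
    s₁ = s₂ ∧ u₁ = u₂ :=
  topological_jordan_decomposition_unique_general p h13 h24 hn₁ hs₁ hcop₁ hn₂ hs₂ hcop₂ hu₁ hu₂ heq
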